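/- arXiv:math/0601099 — 3 statements merged into one kernel-verified Lean document; each statement's English description precedes it below -/
import Mathlib

section
/- For all θ₀, θ ∈ ℝ^Λ, with b = exp(‖log f_{θ₀}‖_∞), the Kullback–Leibler distance within the exponential family satisfies the upper bound Δ(f_{θ₀}; f_{θ}) ≤ (b/2)·e^{A‖θ₀−θ‖₂}·‖θ₀ − θ‖₂². -/
/-! Write `u = log f_{θ₀} - log f_θ = Σ_λ (θ₀ - θ)_λ ψ_λ`. The integrand of `Δ(f_{θ₀}; f_θ)` is
`f_{θ₀} (e^{-u} - 1 + u)`, and Taylor's formula gives `0 ≤ e^{-u} - 1 + u ≤ (u² / 2) e^{|u|}`.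
Since `f_{θ₀} ≤ b` and `|u| ≤ A ‖u‖_{L²} = A ‖θ₀ - θ‖₂`, integrating and using
`∫ u² dμ = ‖θ₀ - θ‖₂²` (orthonormality) gives the bound. -/

open MeasureTheory Set

namespace Real

theorem exp_neg_sub_one_add_le (t : ℝ) : exp (-t) - 1 + t ≤ t ^ 2 / 2 * exp |t| := by
  rcases eq_or_ne t 0 with rfl | ht
  · simp
  have hsmooth : ContDiff ℝ ⊤ fun s : ℝ => exp (-1 * s) := by fun_prop
  -- Lagrange remainder `exp (-ξ) t ^ 2 / 2` with `ξ` between `0` and `t`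
  obtain ⟨ξ, hξ, hrem⟩ := taylor_mean_remainder_lagrange_iteratedDeriv (n := 1) ht.symm
    ((hsmooth.of_le le_top).contDiffOn)
  have htaylor : taylorWithinEval (fun s : ℝ => exp (-1 * s)) 1 (uIcc 0 t) 0 t = 1 - t := by
    rw [taylor_within_apply, Finset.sum_range_succ, Finset.sum_range_one,
      iteratedDerivWithin_zero, iteratedDerivWithin_eq_iteratedDeriv (uniqueDiffOn_uIcc ht.symm)
        (hsmooth.of_le le_top).contDiffAt left_mem_uIcc, iteratedDeriv_exp_const_mul]
    simp only [Nat.factorial_zero, Nat.factorial_one, Nat.cast_one, inv_one, sub_zero, pow_zero,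
      pow_one, mul_one, one_mul, mul_zero, exp_zero, smul_eq_mul]
    ring
  simp only [htaylor, iteratedDeriv_exp_const_mul] at hrem
  simp only [neg_mul, one_mul, even_two, Even.neg_pow, one_pow, sub_zero, Nat.reduceAdd,
    Nat.factorial_two, Nat.cast_ofNat] at hrem
  have hξt : -ξ ≤ |t| := by
    rcases le_or_gt 0 t with h | h
    · rw [uIoo_of_le h] at hξ; rw [abs_of_nonneg h]; linarith [hξ.1]
    · rw [uIoo_of_ge h.le] at hξ; rw [abs_of_neg h]; linarith [hξ.1]
  calc exp (-t) - 1 + t = t ^ 2 / 2 * exp (-ξ) := by linarith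
    _ ≤ t ^ 2 / 2 * exp |t| := by gcongr

theorem exp_mul_log_exp_div_exp_sub_add (a b : ℝ) :
    exp a * log (exp a / exp b) - exp a + exp b = exp a * (exp (-(a - b)) - 1 + (a - b)) := by
  rw [← exp_sub, log_exp, exp_neg, exp_sub, inv_div]
  field_simp
  ring

theorem exp_mul_log_exp_div_exp_sub_add_nonneg (a b : ℝ) :
    0 ≤ exp a * log (exp a / exp b) - exp a + exp b := by
  rw [exp_mul_log_exp_div_exp_sub_add]
  exact mul_nonneg (exp_pos a).le (by linarith [add_one_le_exp (-(a - b))])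

theorem exp_mul_log_exp_div_exp_sub_add_le {a b B r : ℝ} (ha : a ≤ B) (hab : |a - b| ≤ r) :
    exp a * log (exp a / exp b) - exp a + exp b ≤ exp B / 2 * exp r * (a - b) ^ 2 := by
  rw [exp_mul_log_exp_div_exp_sub_add]
  calc exp a * (exp (-(a - b)) - 1 + (a - b))
      ≤ exp B * ((a - b) ^ 2 / 2 * exp r) := by
        gcongr
        · linarith [add_one_le_exp (-(a - b))]
        · exact (exp_neg_sub_one_add_le _).trans (by gcongr)
    _ = exp B / 2 * exp r * (a - b) ^ 2 := by ring

end Real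

section Orthonormal

variable {E : Type*} [MeasurableSpace E] {μ : Measure E}

-- A non-integrable function has integral `0`.
theorem memLp_two_of_integral_mul_self_ne_zero {f : E → ℝ} (hf : AEStronglyMeasurable f μ)
    (h : ∫ x, f x * f x ∂μ ≠ 0) : MemLp f 2 μ :=
  (memLp_two_iff_integrable_sq hf).2 (by simpa only [sq] using Integrable.of_integral_ne_zero h)

variable {Λ : Type*} [Fintype Λ] {ψ : Λ → E → ℝ}

theorem integrable_sq_sum_mul (hψ : ∀ l, MemLp (ψ l) 2 μ) (c : Λ → ℝ) :
    Integrable (fun x => (∑ l, c l * ψ l x) ^ 2) μ :=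
  (memLp_finsetSum _ fun l _ => (hψ l).const_mul (c l)).integrable_sq

theorem integral_sq_sum_mul_eq_sum_sq [DecidableEq Λ] (hψ : ∀ l, MemLp (ψ l) 2 μ)
    (horth : ∀ l k, ∫ x, ψ l x * ψ k x ∂μ = if l = k then (1 : ℝ) else 0) (c : Λ → ℝ) :
    ∫ x, (∑ l, c l * ψ l x) ^ 2 ∂μ = ∑ l, c l ^ 2 := by
  have hint : ∀ l k, Integrable (fun x => c l * c k * (ψ l x * ψ k x)) μ :=
    fun l k => ((hψ l).integrable_mul (hψ k)).const_mul _
  calc ∫ x, (∑ l, c l * ψ l x) ^ 2 ∂μ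
      = ∫ x, ∑ l, ∑ k, c l * c k * (ψ l x * ψ k x) ∂μ := by
        congr with x
        rw [sq, Finset.sum_mul_sum]
        exact Finset.sum_congr rfl fun l _ => Finset.sum_congr rfl fun k _ => by ring
    _ = ∑ l, ∑ k, c l * c k * ∫ x, ψ l x * ψ k x ∂μ := by
        rw [integral_finsetSum _ fun l _ => integrable_finsetSum _ fun k _ => hint l k]
        refine Finset.sum_congr rfl fun l _ => ?_
        rw [integral_finsetSum _ fun k _ => hint l k]
        simp only [integral_const_mul]
    _ = ∑ l, c l ^ 2 := by simp [horth, sq]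

end Orthonormal

theorem integral_exp_mul_log_exp_div_exp_sub_add_le {E : Type*} [MeasurableSpace E]
    {μ : Measure E} {g h : E → ℝ} {B r : ℝ} (hg : ∀ x, g x ≤ B) (hgh : ∀ x, |g x - h x| ≤ r)
    (hint : Integrable (fun x => (g x - h x) ^ 2) μ) :
    ∫ x, (Real.exp (g x) * Real.log (Real.exp (g x) / Real.exp (h x)) - Real.exp (g x) +
        Real.exp (h x)) ∂μ ≤ Real.exp B / 2 * Real.exp r * ∫ x, (g x - h x) ^ 2 ∂μ := by
  rw [← integral_const_mul]
  exact integral_mono_of_nonneg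
    (ae_of_all _ fun x => Real.exp_mul_log_exp_div_exp_sub_add_nonneg _ _) (hint.const_mul _)
    (ae_of_all _ fun x => Real.exp_mul_log_exp_div_exp_sub_add_le (hg x) (hgh x))

theorem expFamily_kl_upper_bound_general
    {E : Type*} [MeasurableSpace E] (μ : Measure E)
    {Λ : Type*} [Fintype Λ] [DecidableEq Λ] (ψ : Λ → E → ℝ)
    (hmeas : ∀ l, Measurable (ψ l))
    (horth : ∀ l k, ∫ x, ψ l x * ψ k x ∂μ = if l = k then (1 : ℝ) else 0)
    (A : ℝ)
    (hA : ∀ c : Λ → ℝ, ∀ x, |∑ l, c l * ψ l x| ≤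
      A * Real.sqrt (∫ y, (∑ l, c l * ψ l y) ^ 2 ∂μ))
    (θ₀ θ : Λ → ℝ) :
    ∫ x, (Real.exp (∑ l, θ₀ l * ψ l x) *
        Real.log (Real.exp (∑ l, θ₀ l * ψ l x) / Real.exp (∑ l, θ l * ψ l x)) -
        Real.exp (∑ l, θ₀ l * ψ l x) + Real.exp (∑ l, θ l * ψ l x)) ∂μ ≤
      (Real.exp (⨆ x, |∑ l, θ₀ l * ψ l x|) / 2) *
        Real.exp (A * Real.sqrt (∑ l, (θ₀ l - θ l) ^ 2)) * (∑ l, (θ₀ l - θ l) ^ 2) := by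
  have hψ : ∀ l, MemLp (ψ l) 2 μ := fun l =>
    memLp_two_of_integral_mul_self_ne_zero (hmeas l).aestronglyMeasurable (by simp [horth])
  have hdiff : ∀ x, ∑ l, θ₀ l * ψ l x - ∑ l, θ l * ψ l x = ∑ l, (θ₀ l - θ l) * ψ l x := fun x => by
    simp only [← Finset.sum_sub_distrib, sub_mul]
  have hnorm := integral_sq_sum_mul_eq_sum_sq hψ horth (θ₀ - θ)
  simp only [Pi.sub_apply] at hnorm
  -- `hA θ₀` bounds the range, so the supremum is a genuine one and not the junk value `0`.
  have hsup : ∀ x, ∑ l, θ₀ l * ψ l x ≤ ⨆ y, |∑ l, θ₀ l * ψ l y| := fun x =>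
    (le_abs_self _).trans (le_ciSup ⟨_, Set.forall_mem_range.2 (hA θ₀)⟩ x)
  have hdist : ∀ x, |∑ l, θ₀ l * ψ l x - ∑ l, θ l * ψ l x| ≤
      A * Real.sqrt (∑ l, (θ₀ l - θ l) ^ 2) := fun x => by
    rw [hdiff, ← hnorm]
    exact hA _ x
  have hint := integrable_sq_sum_mul hψ (θ₀ - θ)
  simp only [Pi.sub_apply, ← hdiff] at hint
  calc _ ≤ _ := integral_exp_mul_log_exp_div_exp_sub_add_le hsup hdist hint
    _ = _ := by simp only [hdiff, hnorm]

/-- Lemma A.2, third assertion: with `b = exp(‖log f_{θ₀}‖_∞)`, the Kullback–Leibler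
distance within the exponential family satisfies
`Δ(f_{θ₀}; f_θ) ≤ (b/2)·e^{A‖θ₀−θ‖₂}·‖θ₀ − θ‖₂²`. -/
theorem expFamily_kl_upper_bound
    {E : Type*} [MeasurableSpace E] (μ : Measure E) [IsFiniteMeasure μ]
    {Λ : Type*} [Fintype Λ] [DecidableEq Λ] (ψ : Λ → E → ℝ)
    (hmeas : ∀ l, Measurable (ψ l))
    (hbdd : ∀ l, ∃ C : ℝ, ∀ x, |ψ l x| ≤ C)
    (horth : ∀ l k, ∫ x, ψ l x * ψ k x ∂μ = if l = k then (1 : ℝ) else 0)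
    (A : ℝ) (hApos : 0 < A)
    (hA : ∀ c : Λ → ℝ, ∀ x, |∑ l, c l * ψ l x| ≤
      A * Real.sqrt (∫ y, (∑ l, c l * ψ l y) ^ 2 ∂μ))
    (θ₀ θ : Λ → ℝ) :
    ∫ x, (Real.exp (∑ l, θ₀ l * ψ l x) *
        Real.log (Real.exp (∑ l, θ₀ l * ψ l x) / Real.exp (∑ l, θ l * ψ l x)) -
        Real.exp (∑ l, θ₀ l * ψ l x) + Real.exp (∑ l, θ l * ψ l x)) ∂μ ≤
      (Real.exp (⨆ x, |∑ l, θ₀ l * ψ l x|) / 2) *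
        Real.exp (A * Real.sqrt (∑ l, (θ₀ l - θ l) ^ 2)) * (∑ l, (θ₀ l - θ l) ^ 2) :=
  expFamily_kl_upper_bound_general μ ψ hmeas horth A hA θ₀ θ
end

section
/- Pythagorean-like identity (Lemma 3.1): let α ∈ ℝ^Λ and suppose there exists θ(α) ∈ ℝ^Λ such that ∫_E f_{θ(α)} ψ_λ dμ = α_λ for all λ ∈ Λ. Then for any nonnegative integrable measurable function f on E with ∫_E f·|log f| dμ < ∞ and ∫_E f ψ_λ dμ = α_λ for all λ ∈ Λ, and for every θ ∈ ℝ^Λ, one has Δ(f; f_θ) = Δ(f; f_{θ(α)}) + Δ(f_{θ(α)}; f_θ). -/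
open MeasureTheory

/-! Since `log (g / exp s) = log g - s`, each divergence splits as
`∫ g log g - ∫ g s - ∫ g + ∫ exp s`, and for `s = ∑ θ_λ ψ_λ` the cross term `∫ g s = ∑ θ_λ ∫ g ψ_λ`
depends on `g` only through its moments. As `f` and `f_{θ(α)}` both have moments `α`, the cross
terms on the right reduce to `-⟨θ(α), α⟩ + ⟨θ(α), α⟩ - ⟨θ, α⟩`, and `∫ f_{θ(α)}` cancels. -/

section KullbackLeibler

variable {E : Type*} [MeasurableSpace E] {μ : Measure E}

theorem MeasureTheory.Integrable.mul_log_of_mul_abs_log {g : E → ℝ} (hg : Integrable g μ)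
    (hglog : Integrable (fun x => g x * |Real.log (g x)|) μ) :
    Integrable (fun x => g x * Real.log (g x)) μ := by
  refine hglog.mono ?_ (ae_of_all _ fun x => ?_)
  · exact hg.aestronglyMeasurable.mul
      (Real.measurable_log.comp_aemeasurable hg.aemeasurable).aestronglyMeasurable
  · simp only [Real.norm_eq_abs, abs_mul, abs_abs, le_refl]

theorem Real.mul_log_div_exp (a s : ℝ) :
    a * Real.log (a / Real.exp s) = a * Real.log a - a * s := by
  rcases eq_or_ne a 0 with rfl | ha
  · simp
  · rw [Real.log_div ha (Real.exp_ne_zero s), Real.log_exp, mul_sub]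

theorem integral_mul_log_div_exp_sub_add_exp {g s : E → ℝ} (hg : Integrable g μ)
    (hglog : Integrable (fun x => g x * Real.log (g x)) μ)
    (hgs : Integrable (fun x => g x * s x) μ) (hs : Integrable (fun x => Real.exp (s x)) μ) :
    ∫ x, (g x * Real.log (g x / Real.exp (s x)) - g x + Real.exp (s x)) ∂μ =
      ∫ x, g x * Real.log (g x) ∂μ - ∫ x, g x * s x ∂μ - ∫ x, g x ∂μ +
        ∫ x, Real.exp (s x) ∂μ := by
  simp only [Real.mul_log_div_exp]
  rw [integral_add (f := fun x => g x * Real.log (g x) - g x * s x - g x)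
      ((hglog.sub hgs).sub hg) hs,
    integral_sub (f := fun x => g x * Real.log (g x) - g x * s x) (hglog.sub hgs) hg,
    integral_sub hglog hgs]

end KullbackLeibler

section ExponentialFamily

variable {E : Type*} {Λ : Type*} [Fintype Λ] {ψ : Λ → E → ℝ}

theorem exists_abs_sum_mul_le (hbdd : ∀ l, ∃ C : ℝ, ∀ x, |ψ l x| ≤ C) (θ : Λ → ℝ) :
    ∃ C : ℝ, ∀ x, |∑ l, θ l * ψ l x| ≤ C := by
  choose C hC using hbdd
  refine ⟨∑ l, |θ l| * C l, fun x => ?_⟩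
  calc |∑ l, θ l * ψ l x| ≤ ∑ l, |θ l * ψ l x| := Finset.abs_sum_le_sum_abs _ _
    _ ≤ ∑ l, |θ l| * C l := Finset.sum_le_sum fun l _ => by
        rw [abs_mul]; exact mul_le_mul_of_nonneg_left (hC l x) (abs_nonneg _)

theorem mul_sum_mul_eq (g : E → ℝ) (θ : Λ → ℝ) :
    (fun x => g x * ∑ l, θ l * ψ l x) = fun x => ∑ l, θ l * (g x * ψ l x) := by
  funext x
  rw [Finset.mul_sum]
  exact Finset.sum_congr rfl fun l _ => by ring

variable [MeasurableSpace E] {μ : Measure E}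

theorem MeasureTheory.Integrable.mul_of_bounded {g : E → ℝ} (hg : Integrable g μ) {φ : E → ℝ}
    (hφ : Measurable φ) (hbdd : ∃ C : ℝ, ∀ x, |φ x| ≤ C) :
    Integrable (fun x => g x * φ x) μ := by
  obtain ⟨C, hC⟩ := hbdd
  exact hg.mul_bdd hφ.aestronglyMeasurable (ae_of_all _ hC)

theorem integrable_exp_sum_mul [IsFiniteMeasure μ] (hmeas : ∀ l, Measurable (ψ l))
    (hbdd : ∀ l, ∃ C : ℝ, ∀ x, |ψ l x| ≤ C) (θ : Λ → ℝ) :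
    Integrable (fun x => Real.exp (∑ l, θ l * ψ l x)) μ := by
  obtain ⟨C, hC⟩ := exists_abs_sum_mul_le hbdd θ
  refine .of_bound (by fun_prop) (Real.exp C) (ae_of_all _ fun x => ?_)
  rw [Real.norm_eq_abs, abs_of_pos (Real.exp_pos _)]
  exact Real.exp_le_exp.mpr (abs_le.mp (hC x)).2

theorem integrable_mul_sum_mul {g : E → ℝ} (hg : ∀ l, Integrable (fun x => g x * ψ l x) μ)
    (θ : Λ → ℝ) : Integrable (fun x => g x * ∑ l, θ l * ψ l x) μ := by
  rw [mul_sum_mul_eq]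
  exact integrable_finsetSum _ fun l _ => (hg l).const_mul _

theorem integral_mul_sum_mul {g : E → ℝ} (hg : ∀ l, Integrable (fun x => g x * ψ l x) μ)
    (θ : Λ → ℝ) : ∫ x, g x * ∑ l, θ l * ψ l x ∂μ = ∑ l, θ l * ∫ x, g x * ψ l x ∂μ := by
  rw [mul_sum_mul_eq, integral_finsetSum _ fun l _ => (hg l).const_mul _]
  exact Finset.sum_congr rfl fun l _ => integral_const_mul _ _

end ExponentialFamily

theorem information_projection_pythagoras_general
    {E : Type*} [MeasurableSpace E] (μ : Measure E) [IsFiniteMeasure μ]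
    {Λ : Type*} [Fintype Λ] (ψ : Λ → E → ℝ)
    (hmeas : ∀ l, Measurable (ψ l))
    (hbdd : ∀ l, ∃ C : ℝ, ∀ x, |ψ l x| ≤ C)
    (α : Λ → ℝ) (θα : Λ → ℝ)
    (hθα : ∀ l, ∫ x, Real.exp (∑ l', θα l' * ψ l' x) * ψ l x ∂μ = α l)
    (f : E → ℝ)
    (hfint : Integrable f μ)
    (hflog : Integrable (fun x => f x * |Real.log (f x)|) μ)
    (hfmom : ∀ l, ∫ x, f x * ψ l x ∂μ = α l)
    (θ : Λ → ℝ) :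
    ∫ x, (f x * Real.log (f x / Real.exp (∑ l, θ l * ψ l x)) - f x +
        Real.exp (∑ l, θ l * ψ l x)) ∂μ =
      (∫ x, (f x * Real.log (f x / Real.exp (∑ l, θα l * ψ l x)) - f x +
        Real.exp (∑ l, θα l * ψ l x)) ∂μ) +
      ∫ x, (Real.exp (∑ l, θα l * ψ l x) *
          Real.log (Real.exp (∑ l, θα l * ψ l x) / Real.exp (∑ l, θ l * ψ l x)) -
          Real.exp (∑ l, θα l * ψ l x) + Real.exp (∑ l, θ l * ψ l x)) ∂μ := by
  have hexp := integrable_exp_sum_mul (μ := μ) hmeas hbdd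
  have hfψ l := hfint.mul_of_bounded (hmeas l) (hbdd l)
  have hexpψ l := (hexp θα).mul_of_bounded (hmeas l) (hbdd l)
  have hexplog : Integrable (fun x => Real.exp (∑ l, θα l * ψ l x) *
      Real.log (Real.exp (∑ l, θα l * ψ l x))) μ := by
    simpa only [Real.log_exp] using integrable_mul_sum_mul hexpψ θα
  rw [integral_mul_log_div_exp_sub_add_exp hfint (hfint.mul_log_of_mul_abs_log hflog)
      (integrable_mul_sum_mul hfψ θ) (hexp θ),
    integral_mul_log_div_exp_sub_add_exp hfint (hfint.mul_log_of_mul_abs_log hflog)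
      (integrable_mul_sum_mul hfψ θα) (hexp θα),
    integral_mul_log_div_exp_sub_add_exp (hexp θα) hexplog
      (integrable_mul_sum_mul hexpψ θ) (hexp θ)]
  simp only [Real.log_exp, integral_mul_sum_mul hfψ, integral_mul_sum_mul hexpψ, hfmom, hθα]
  ring

/-- Pythagorean-like identity (Lemma 3.1): if `θ(α)` matches the moments `α` of the
exponential family, then for any nonnegative integrable `f` with `∫ f·|log f| dμ < ∞`
and the same moments `α`, and for every `θ`,
`Δ(f; f_θ) = Δ(f; f_{θ(α)}) + Δ(f_{θ(α)}; f_θ)`. -/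
theorem information_projection_pythagoras
    {E : Type*} [MeasurableSpace E] (μ : Measure E) [IsFiniteMeasure μ]
    {Λ : Type*} [Fintype Λ] [DecidableEq Λ] (ψ : Λ → E → ℝ)
    (hmeas : ∀ l, Measurable (ψ l))
    (hbdd : ∀ l, ∃ C : ℝ, ∀ x, |ψ l x| ≤ C)
    (horth : ∀ l k, ∫ x, ψ l x * ψ k x ∂μ = if l = k then (1 : ℝ) else 0)
    (α : Λ → ℝ) (θα : Λ → ℝ)
    (hθα : ∀ l, ∫ x, Real.exp (∑ l', θα l' * ψ l' x) * ψ l x ∂μ = α l)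
    (f : E → ℝ) (hfmeas : Measurable f) (hfnn : ∀ x, 0 ≤ f x)
    (hfint : Integrable f μ)
    (hflog : Integrable (fun x => f x * |Real.log (f x)|) μ)
    (hfmom : ∀ l, ∫ x, f x * ψ l x ∂μ = α l)
    (θ : Λ → ℝ) :
    ∫ x, (f x * Real.log (f x / Real.exp (∑ l, θ l * ψ l x)) - f x +
        Real.exp (∑ l, θ l * ψ l x)) ∂μ =
      (∫ x, (f x * Real.log (f x / Real.exp (∑ l, θα l * ψ l x)) - f x +
        Real.exp (∑ l, θα l * ψ l x)) ∂μ) +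
      ∫ x, (Real.exp (∑ l, θα l * ψ l x) *
          Real.log (Real.exp (∑ l, θα l * ψ l x) / Real.exp (∑ l, θ l * ψ l x)) -
          Real.exp (∑ l, θα l * ψ l x) + Real.exp (∑ l, θ l * ψ l x)) ∂μ :=
  information_projection_pythagoras_general μ ψ hmeas hbdd α θα hθα f hfint hflog hfmom θ
end

section
/- Lemma 3.2, inequality (3.2): let θ₀ ∈ ℝ^Λ, α_{0,λ} = ∫_E f_{θ₀} ψ_λ dμ, b = exp(‖log f_{θ₀}‖_∞), e = exp(1), and let α ∈ ℝ^Λ with ‖α − α₀‖₂ ≤ 1/(2·e·b·A). Then there exists θ(α) ∈ ℝ^Λ with ∫_E f_{θ(α)} ψ_λ dμ = α_λ for all λ ∈ Λ and ‖log(f_{θ₀}/f_{θ(α)})‖_∞ ≤ 2·e·b·A·‖α − α₀‖₂. -/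
/-!
View `θ` as a vector of Euclidean space, so that `log f_θ = ∑ θ_λ ψ_λ` satisfies
`∫ (log f_θ)² = ‖θ‖²` and `‖log f_θ‖_∞ ≤ A ‖θ‖`, and let `F θ = (∫ f_θ ψ_λ dμ)_λ`. On the ball of
radius `r = 2 e b ‖α - α₀‖` around `θ₀` we have `A r ≤ 1`, so `(e b)⁻¹ ≤ f_θ ≤ e b` there. Hence
`⟪θ - θ', F θ - F θ'⟫ = ∫ (f_θ - f_θ') (log f_θ - log f_θ') ≥ (e b)⁻¹ ‖θ - θ'‖²`, and by Bessel's
inequality `‖F θ - F θ'‖ ≤ e b ‖θ - θ'‖`. For an `m`-strongly monotone Lipschitz map,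
`θ ↦ θ + c (α - F θ)` is a contraction of the ball into itself as soon as `‖α - F θ₀‖ ≤ m r / 2`,
which here is exactly `‖α - α₀‖`; its fixed point `θ(α)` solves `F θ(α) = α`, and
`|log (f_θ₀ / f_θ(α))| ≤ A ‖θ₀ - θ(α)‖ ≤ A r`.
-/

open MeasureTheory Metric Set Real
open scoped NNReal RealInnerProductSpace

section StronglyMonotone
variable {V : Type*} [NormedAddCommGroup V] [InnerProductSpace ℝ V]

lemma norm_sub_smul_le {d e : V} {m K c : ℝ} (hd : m * ‖d‖ ^ 2 ≤ ⟪d, e⟫) (he : ‖e‖ ≤ K * ‖d‖)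
    (hc : 0 ≤ c) (hcK : c * K ^ 2 ≤ m) (hcm : c * m ≤ 2) :
    ‖d - c • e‖ ≤ (1 - c * m / 2) * ‖d‖ := by
  have he2 : ‖e‖ ^ 2 ≤ K ^ 2 * ‖d‖ ^ 2 := by
    rw [← mul_pow]; exact pow_le_pow_left₀ (norm_nonneg e) he 2
  have hsq : ‖d - c • e‖ ^ 2 ≤ (1 - c * m) * ‖d‖ ^ 2 := by
    rw [norm_sub_sq_real, inner_smul_right, norm_smul, Real.norm_of_nonneg hc]
    nlinarith [mul_le_mul_of_nonneg_left he2 (sq_nonneg c), mul_le_mul_of_nonneg_left hd hc,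
      mul_le_mul_of_nonneg_right hcK (sq_nonneg ‖d‖)]
  refine (pow_le_pow_iff_left₀ (norm_nonneg _) (by nlinarith [norm_nonneg d]) two_ne_zero).1 ?_
  nlinarith [sq_nonneg (c * m), sq_nonneg ‖d‖]

variable [CompleteSpace V]

/-- The map `x ↦ x + c • (y - F x)`, `c = m / (K² + m²)`, is a `(1 - c m / 2)`-contraction of the
ball into itself, and its fixed point solves `F x = y`. -/
theorem exists_mem_closedBall_eq_of_stronglyMonotoneOn {F : V → V} {x₀ y : V} {r m : ℝ} {K : ℝ≥0}
    (hm : 0 < m)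
    (hmono : ∀ x ∈ closedBall x₀ r, ∀ x' ∈ closedBall x₀ r, m * ‖x - x'‖ ^ 2 ≤ ⟪x - x', F x - F x'⟫)
    (hlip : LipschitzOnWith K F (closedBall x₀ r)) (hy : ‖y - F x₀‖ ≤ m * r / 2) :
    ∃ x ∈ closedBall x₀ r, F x = y := by
  have hr : 0 ≤ r := by nlinarith [norm_nonneg (y - F x₀)]
  set c := m / (K ^ 2 + m ^ 2)
  have hc : 0 < c := by positivity
  have hden : 0 < (K : ℝ) ^ 2 + m ^ 2 := by positivity
  have hcK : c * K ^ 2 ≤ m := by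
    rw [div_mul_eq_mul_div, div_le_iff₀ hden]; nlinarith [sq_nonneg m]
  have hcm : c * m ≤ 1 := by
    rw [div_mul_eq_mul_div, div_le_iff₀ hden]; nlinarith [sq_nonneg (K : ℝ)]
  set G : V → V := fun x => x + c • (y - F x)
  have hcontr : ∀ x ∈ closedBall x₀ r, ∀ x' ∈ closedBall x₀ r,
      ‖G x - G x'‖ ≤ (1 - c * m / 2) * ‖x - x'‖ := fun x hx x' hx' => by
    rw [show G x - G x' = (x - x') - c • (F x - F x') by simp only [G]; module]
    exact norm_sub_smul_le (hmono x hx x' hx') (hlip.norm_sub_le hx hx') hc.le hcK (by linarith)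
  have hmaps : MapsTo G (closedBall x₀ r) (closedBall x₀ r) := by
    intro x hx
    have hGx := hcontr x hx x₀ (mem_closedBall_self hr)
    rw [mem_closedBall, dist_eq_norm] at hx ⊢
    calc ‖G x - x₀‖ = ‖(G x - G x₀) + c • (y - F x₀)‖ := by simp only [G]; congr 1; module
      _ ≤ (1 - c * m / 2) * r + c * (m * r / 2) := by
          have hk : 0 ≤ 1 - c * m / 2 := by linarith
          grw [norm_add_le, norm_smul, Real.norm_of_nonneg hc.le, hGx, hx, hy]
      _ = r := by ring
  have hGlip : LipschitzOnWith (1 - c * m / 2).toNNReal G (closedBall x₀ r) :=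
    .of_dist_le' (by simpa only [dist_eq_norm] using hcontr)
  obtain ⟨x, hx, hfix, -⟩ := ContractingWith.exists_fixedPoint' isClosed_closedBall.isComplete
    hmaps ⟨Real.toNNReal_lt_one.2 (by linarith [mul_pos hc hm]), hGlip.mapsToRestrict hmaps⟩
    (mem_closedBall_self hr) (edist_ne_top _ _)
  have hzero : c • (y - F x) = 0 := add_eq_left.1 hfix
  exact ⟨x, hx, (sub_eq_zero.1 ((smul_eq_zero.1 hzero).resolve_left hc.ne')).symm⟩

end StronglyMonotone

section Expansion
variable {E : Type*} {Λ : Type*} [Fintype Λ] {ψ : Λ → E → ℝ}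

def expansion (ψ : Λ → E → ℝ) (c : EuclideanSpace ℝ Λ) (x : E) : ℝ := ∑ l, c l * ψ l x

lemma expansion_sub (c c' : EuclideanSpace ℝ Λ) :
    expansion ψ (c - c') = expansion ψ c - expansion ψ c' := by
  ext x
  simp only [expansion, PiLp.sub_apply, sub_mul, Finset.sum_sub_distrib, Pi.sub_apply]

lemma abs_expansion_sub_le {A : ℝ} (hA : ∀ c x, |expansion ψ c x| ≤ A * ‖c‖)
    (θ θ' : EuclideanSpace ℝ Λ) (x : E) :
    |expansion ψ θ x - expansion ψ θ' x| ≤ A * dist θ θ' := by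
  rw [dist_eq_norm, ← Pi.sub_apply, ← expansion_sub]
  exact hA _ x

end Expansion

section Coefficients
variable {E : Type*} [MeasurableSpace E] {μ : Measure E} {Λ : Type*} {ψ : Λ → E → ℝ}

noncomputable def coeffs (μ : Measure E) (ψ : Λ → E → ℝ) (g : E → ℝ) : EuclideanSpace ℝ Λ :=
  WithLp.toLp 2 fun l => ∫ x, g x * ψ l x ∂μ

lemma coeffs_sub (hψ : ∀ l, MemLp (ψ l) 2 μ) {g g' : E → ℝ} (hg : MemLp g 2 μ)
    (hg' : MemLp g' 2 μ) : coeffs μ ψ (g - g') = coeffs μ ψ g - coeffs μ ψ g' := by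
  ext l
  simp only [coeffs, PiLp.sub_apply, Pi.sub_apply, sub_mul]
  exact integral_sub (hg.integrable_mul (hψ l)) (hg'.integrable_mul (hψ l))

variable [Fintype Λ] (hψ : ∀ l, MemLp (ψ l) 2 μ)
include hψ

lemma memLp_expansion (c : EuclideanSpace ℝ Λ) : MemLp (expansion ψ c) 2 μ := by
  have : expansion ψ c = ∑ l, c l • ψ l := by ext x; simp [expansion]
  rw [this]
  exact memLp_finsetSum' _ fun l _ => (hψ l).const_smul _

lemma inner_coeffs (c : EuclideanSpace ℝ Λ) {g : E → ℝ} (hg : MemLp g 2 μ) :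
    ⟪coeffs μ ψ g, c⟫ = ∫ x, g x * expansion ψ c x ∂μ := by
  calc ⟪coeffs μ ψ g, c⟫ = ∑ l, ∫ x, c l * (g x * ψ l x) ∂μ := by
        simp only [PiLp.inner_apply, coeffs, RCLike.inner_apply, conj_trivial, integral_const_mul]
    _ = ∫ x, g x * expansion ψ c x ∂μ := by
        rw [← integral_finsetSum (f := fun l x => c l * (g x * ψ l x)) _
          fun l _ => (hg.integrable_mul (hψ l)).const_mul (c l)]
        simp only [expansion, Finset.mul_sum]
        congr 1; ext x; congr 1; ext l; ring

variable [DecidableEq Λ] (horth : ∀ l k, ∫ x, ψ l x * ψ k x ∂μ = if l = k then (1 : ℝ) else 0)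
include horth

lemma coeffs_expansion (c : EuclideanSpace ℝ Λ) : coeffs μ ψ (expansion ψ c) = c := by
  ext k
  simp only [coeffs, expansion, Finset.sum_mul, mul_assoc]
  rw [integral_finsetSum (f := fun l x => c l * (ψ l x * ψ k x)) _
    fun l _ => ((hψ l).integrable_mul (hψ k)).const_mul (c l)]
  simp [integral_const_mul, horth]

lemma integral_expansion_sq (c : EuclideanSpace ℝ Λ) :
    ∫ x, expansion ψ c x ^ 2 ∂μ = ‖c‖ ^ 2 := by
  have h := inner_coeffs hψ c (memLp_expansion hψ c)
  rw [coeffs_expansion hψ horth, real_inner_self_eq_norm_sq] at h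
  simp only [h, sq]

lemma abs_expansion_le_mul_norm {A : ℝ} (hA : ∀ c : Λ → ℝ, ∀ x, |∑ l, c l * ψ l x| ≤
      A * sqrt (∫ y, (∑ l, c l * ψ l y) ^ 2 ∂μ)) (c : EuclideanSpace ℝ Λ) (x : E) :
    |expansion ψ c x| ≤ A * ‖c‖ := by
  have h : |expansion ψ c x| ≤ A * sqrt (∫ y, expansion ψ c y ^ 2 ∂μ) := hA c.ofLp x
  rwa [integral_expansion_sq hψ horth, sqrt_sq (norm_nonneg c)] at h

lemma norm_coeffs_sq_le {g : E → ℝ} (hg : MemLp g 2 μ) :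
    ‖coeffs μ ψ g‖ ^ 2 ≤ ∫ x, g x ^ 2 ∂μ := by
  set c := coeffs μ ψ g
  have hu := memLp_expansion hψ c
  have hcross : ∫ x, g x * expansion ψ c x ∂μ = ‖c‖ ^ 2 := by
    rw [← inner_coeffs hψ c hg, real_inner_self_eq_norm_sq]
  have hexp : ∫ x, (g x - expansion ψ c x) ^ 2 ∂μ
      = ∫ x, g x ^ 2 ∂μ - 2 * ∫ x, g x * expansion ψ c x ∂μ + ∫ x, expansion ψ c x ^ 2 ∂μ := by
    have hsplit : ∀ x, (g x - expansion ψ c x) ^ 2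
        = g x ^ 2 - 2 * (g x * expansion ψ c x) + expansion ψ c x ^ 2 := fun x => by ring
    simp only [hsplit]
    have hgu : Integrable (fun x => g x * expansion ψ c x) μ := hg.integrable_mul hu
    have hsub : Integrable (fun x => g x ^ 2 - 2 * (g x * expansion ψ c x)) μ :=
      hg.integrable_sq.sub (hgu.const_mul 2)
    rw [integral_add hsub hu.integrable_sq,
      integral_sub hg.integrable_sq (hgu.const_mul 2), integral_const_mul]
  have : 0 ≤ ∫ x, (g x - expansion ψ c x) ^ 2 ∂μ := integral_nonneg fun x => sq_nonneg _
  rw [hexp, hcross, integral_expansion_sq hψ horth] at this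
  linarith

end Coefficients

lemma exp_mul_sub_le_exp_sub_exp (a b : ℝ) : exp a * (b - a) ≤ exp b - exp a := by
  have h : exp a * exp (b - a) = exp b := by rw [← exp_add]; ring_nf
  nlinarith [mul_le_mul_of_nonneg_left (add_one_le_exp (b - a)) (exp_pos a).le]

lemma exp_sub_exp_le_exp_mul_sub (a b : ℝ) : exp b - exp a ≤ exp b * (b - a) := by
  have h : exp b * exp (a - b) = exp a := by rw [← exp_add]; ring_nf
  nlinarith [mul_le_mul_of_nonneg_left (add_one_le_exp (a - b)) (exp_pos b).le]

lemma exp_neg_mul_sq_le_exp_sub_exp_mul_sub {a b R : ℝ} (ha : |a| ≤ R) (hb : |b| ≤ R) :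
    exp (-R) * (a - b) ^ 2 ≤ (exp a - exp b) * (a - b) := by
  have hRa : exp (-R) ≤ exp a := exp_le_exp.2 (neg_le_of_abs_le ha)
  have hRb : exp (-R) ≤ exp b := exp_le_exp.2 (neg_le_of_abs_le hb)
  rcases le_total a b with hab | hab
  · nlinarith [exp_mul_sub_le_exp_sub_exp a b, mul_le_mul_of_nonneg_right hRa (sub_nonneg.2 hab)]
  · nlinarith [exp_mul_sub_le_exp_sub_exp b a, mul_le_mul_of_nonneg_right hRb (sub_nonneg.2 hab)]

lemma abs_exp_sub_exp_le_exp_mul {a b R : ℝ} (ha : |a| ≤ R) (hb : |b| ≤ R) :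
    |exp a - exp b| ≤ exp R * |a - b| := by
  have hRa : exp a ≤ exp R := exp_le_exp.2 (le_of_abs_le ha)
  have hRb : exp b ≤ exp R := exp_le_exp.2 (le_of_abs_le hb)
  rcases le_total a b with hab | hab
  · rw [abs_of_nonpos (by linarith [exp_le_exp.2 hab]), abs_of_nonpos (by linarith)]
    nlinarith [exp_sub_exp_le_exp_mul_sub a b, mul_le_mul_of_nonneg_right hRb (sub_nonneg.2 hab)]
  · rw [abs_of_nonneg (by linarith [exp_le_exp.2 hab]), abs_of_nonneg (by linarith)]
    nlinarith [exp_sub_exp_le_exp_mul_sub b a, mul_le_mul_of_nonneg_right hRa (sub_nonneg.2 hab)]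

section MomentMap
variable {E : Type*} [MeasurableSpace E] {μ : Measure E} [IsFiniteMeasure μ] {Λ : Type*}
  [Fintype Λ] {ψ : Λ → E → ℝ}

noncomputable def momentMap (μ : Measure E) (ψ : Λ → E → ℝ) (θ : EuclideanSpace ℝ Λ) :
    EuclideanSpace ℝ Λ :=
  coeffs μ ψ fun x => exp (expansion ψ θ x)

variable (hψ : ∀ l, MemLp (ψ l) 2 μ)
include hψ

lemma memLp_exp_expansion {θ : EuclideanSpace ℝ Λ} {R : ℝ} (hθ : ∀ x, |expansion ψ θ x| ≤ R) :
    MemLp (fun x => exp (expansion ψ θ x)) 2 μ :=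
  .of_bound (Real.continuous_exp.comp_aestronglyMeasurable
      (memLp_expansion hψ θ).aestronglyMeasurable) (exp R) (ae_of_all μ fun x => by
    rw [Real.norm_of_nonneg (exp_pos _).le]
    exact exp_le_exp.2 (le_of_abs_le (hθ x)))

variable [DecidableEq Λ] (horth : ∀ l k, ∫ x, ψ l x * ψ k x ∂μ = if l = k then (1 : ℝ) else 0)
include horth

lemma exp_neg_mul_sq_le_inner_momentMap_sub {θ θ' : EuclideanSpace ℝ Λ} {R : ℝ}
    (hθ : ∀ x, |expansion ψ θ x| ≤ R) (hθ' : ∀ x, |expansion ψ θ' x| ≤ R) :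
    exp (-R) * ‖θ - θ'‖ ^ 2 ≤ ⟪θ - θ', momentMap μ ψ θ - momentMap μ ψ θ'⟫ := by
  have hf := memLp_exp_expansion hψ hθ
  have hf' := memLp_exp_expansion hψ hθ'
  have hu := memLp_expansion hψ (θ - θ')
  rw [momentMap, momentMap, ← coeffs_sub hψ hf hf', real_inner_comm,
    inner_coeffs hψ _ (hf.sub hf'), ← integral_expansion_sq hψ horth, ← integral_const_mul]
  refine integral_mono (hu.integrable_sq.const_mul _) ((hf.sub hf').integrable_mul hu) fun x => ?_
  simp only [expansion_sub, Pi.sub_apply]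
  exact exp_neg_mul_sq_le_exp_sub_exp_mul_sub (hθ x) (hθ' x)

lemma norm_momentMap_sub_le {θ θ' : EuclideanSpace ℝ Λ} {R : ℝ}
    (hθ : ∀ x, |expansion ψ θ x| ≤ R) (hθ' : ∀ x, |expansion ψ θ' x| ≤ R) :
    ‖momentMap μ ψ θ - momentMap μ ψ θ'‖ ≤ exp R * ‖θ - θ'‖ := by
  have hf := memLp_exp_expansion hψ hθ
  have hf' := memLp_exp_expansion hψ hθ'
  have hu := memLp_expansion hψ (θ - θ')
  refine (pow_le_pow_iff_left₀ (norm_nonneg _) (by positivity) two_ne_zero).1 ?_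
  rw [momentMap, momentMap, ← coeffs_sub hψ hf hf', mul_pow,
    ← integral_expansion_sq hψ horth (θ - θ'), ← integral_const_mul]
  refine (norm_coeffs_sq_le hψ horth (hf.sub hf')).trans
    (integral_mono (hf.sub hf').integrable_sq (hu.integrable_sq.const_mul _) fun x => ?_)
  simp only [expansion_sub, Pi.sub_apply]
  rw [← sq_abs, ← sq_abs (expansion ψ θ x - _), ← mul_pow]
  exact pow_le_pow_left₀ (abs_nonneg _) (abs_exp_sub_exp_le_exp_mul (hθ x) (hθ' x)) 2

theorem exists_mem_closedBall_momentMap_eq {A L : ℝ} (hA0 : 0 ≤ A)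
    (hA : ∀ c x, |expansion ψ c x| ≤ A * ‖c‖) {θ₀ α : EuclideanSpace ℝ Λ}
    (hL : ∀ x, |expansion ψ θ₀ x| ≤ L)
    (hclose : 2 * exp 1 * exp L * A * ‖α - momentMap μ ψ θ₀‖ ≤ 1) :
    ∃ θ ∈ closedBall θ₀ (2 * exp 1 * exp L * ‖α - momentMap μ ψ θ₀‖), momentMap μ ψ θ = α := by
  set r := 2 * exp 1 * exp L * ‖α - momentMap μ ψ θ₀‖
  have hball : ∀ θ ∈ closedBall θ₀ r, ∀ x, |expansion ψ θ x| ≤ L + 1 := fun θ hθ x => by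
    have h₁ := abs_expansion_sub_le hA θ θ₀ x
    have h₂ := abs_sub_abs_le_abs_sub (expansion ψ θ x) (expansion ψ θ₀ x)
    have h₃ := mul_le_mul_of_nonneg_left (mem_closedBall.1 hθ) hA0
    linarith [hL x]
  have hy : ‖α - momentMap μ ψ θ₀‖ ≤ exp (-(L + 1)) * r / 2 := by
    have h : exp (-(L + 1)) * exp 1 * exp L = 1 := by
      rw [← exp_add, ← exp_add, ← exp_zero]; ring_nf
    exact le_of_eq (by linear_combination (-‖α - momentMap μ ψ θ₀‖) * h)
  exact exists_mem_closedBall_eq_of_stronglyMonotoneOn (exp_pos (-(L + 1)))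
    (fun θ hθ θ' hθ' => exp_neg_mul_sq_le_inner_momentMap_sub hψ horth (hball θ hθ) (hball θ' hθ'))
    (LipschitzOnWith.of_dist_le' fun θ hθ θ' hθ' => by
      simpa only [dist_eq_norm] using norm_momentMap_sub_le hψ horth (hball θ hθ) (hball θ' hθ'))
    hy

end MomentMap

/-- Lemma 3.2, inequality (3.2): under `‖α − α₀‖₂ ≤ 1/(2·e·b·A)` there exists `θ(α)`
satisfying the moment equations and `‖log(f_{θ₀}/f_{θ(α)})‖_∞ ≤ 2·e·b·A·‖α − α₀‖₂`. -/
theorem information_projection_log_ratio_bound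
    {E : Type*} [MeasurableSpace E] (μ : Measure E) [IsFiniteMeasure μ]
    {Λ : Type*} [Fintype Λ] [DecidableEq Λ] (ψ : Λ → E → ℝ)
    (hmeas : ∀ l, Measurable (ψ l))
    (hbdd : ∀ l, ∃ C : ℝ, ∀ x, |ψ l x| ≤ C)
    (horth : ∀ l k, ∫ x, ψ l x * ψ k x ∂μ = if l = k then (1 : ℝ) else 0)
    (A : ℝ) (hApos : 0 < A)
    (hA : ∀ c : Λ → ℝ, ∀ x, |∑ l, c l * ψ l x| ≤
      A * Real.sqrt (∫ y, (∑ l, c l * ψ l y) ^ 2 ∂μ))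
    (θ₀ : Λ → ℝ) (α : Λ → ℝ)
    (hclose : Real.sqrt (∑ l,
        (α l - ∫ x, Real.exp (∑ l', θ₀ l' * ψ l' x) * ψ l x ∂μ) ^ 2) ≤
      1 / (2 * Real.exp 1 * Real.exp (⨆ x, |∑ l, θ₀ l * ψ l x|) * A)) :
    ∃ θα : Λ → ℝ, (∀ l, ∫ x, Real.exp (∑ l', θα l' * ψ l' x) * ψ l x ∂μ = α l) ∧
      ∀ x, |Real.log (Real.exp (∑ l, θ₀ l * ψ l x) / Real.exp (∑ l, θα l * ψ l x))| ≤
        2 * Real.exp 1 * Real.exp (⨆ x, |∑ l, θ₀ l * ψ l x|) * A *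
          Real.sqrt (∑ l,
            (α l - ∫ x, Real.exp (∑ l', θ₀ l' * ψ l' x) * ψ l x ∂μ) ^ 2) := by
  set L := ⨆ x, |∑ l, θ₀ l * ψ l x|
  set θ₀' : EuclideanSpace ℝ Λ := WithLp.toLp 2 θ₀
  set α' : EuclideanSpace ℝ Λ := WithLp.toLp 2 α
  have hδ : sqrt (∑ l, (α l - ∫ x, exp (∑ l', θ₀ l' * ψ l' x) * ψ l x ∂μ) ^ 2)
      = ‖α' - momentMap μ ψ θ₀'‖ := by
    simp only [EuclideanSpace.norm_eq, Real.norm_eq_abs, sq_abs]; rfl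
  rw [hδ, le_div_iff₀ (by positivity)] at hclose
  rw [hδ]
  have hψ : ∀ l, MemLp (ψ l) 2 μ := fun l =>
    .of_bound (hmeas l).aestronglyMeasurable _ (ae_of_all μ (hbdd l).choose_spec)
  have hA' := abs_expansion_le_mul_norm hψ horth hA
  have hL : ∀ x, |expansion ψ θ₀' x| ≤ L := fun x =>
    le_ciSup (f := fun x => |expansion ψ θ₀' x|)
      ⟨A * ‖θ₀'‖, by rintro _ ⟨y, rfl⟩; exact hA' θ₀' y⟩ x
  obtain ⟨θ, hθ, hFθ⟩ := exists_mem_closedBall_momentMap_eq hψ horth hApos.le hA' hL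
    (by linarith)
  refine ⟨θ.ofLp, fun l => congrArg (· l) hFθ, fun x => ?_⟩
  rw [← exp_sub, log_exp]
  calc _ ≤ A * dist θ₀' θ := abs_expansion_sub_le hA' θ₀' θ x
    _ ≤ A * (2 * exp 1 * exp L * ‖α' - momentMap μ ψ θ₀'‖) := by
        gcongr; rw [dist_comm]; exact hθ
    _ = _ := by ring
end
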